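/- arXiv:2506.13748 — 2 statements merged into one kernel-verified Lean document; each statement's English description precedes it below -/
import Mathlib

section
/- Partial duality commutes with deletion and contraction: for every ribbon graph 𝔾, every A ⊆ E(𝔾) and every edge e ∉ A, one has (𝔾∖e)^A = 𝔾^A ∖ e and (𝔾/e)^A = 𝔾^A / e. -/
/-!
Formalization of ribbon graphs in the flag (graph-encoded-map) presentation:
a finite set of flags with three involutions `s0, s1, s2` such that `s0 ∘ s2 = s2 ∘ s0`
is fixed-point-free, together with a finite set of (labelled) isolated vertices.
Vertices are the orbits of `⟨s1,s2⟩` together with the isolated vertices, edges the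
orbits of `⟨s0,s2⟩`, boundary components the orbits of `⟨s0,s1⟩` together with one per
isolated vertex, and connected components the orbits of `⟨s0,s1,s2⟩` together with the
isolated vertices.  On top of this we define partial duality, deletion, contraction,
quasi-trees and their activities, packaged ribbon graphs, the packaged surface Tutte
polynomial and the generalised Krushkal polynomial.
-/

open scoped Classical

noncomputable section

namespace QTE

/-- A combinatorial ribbon graph: flags with three maps, plus labelled isolated vertices. -/
structure Ribbon (α : Type) where
  flags : Finset α
  s0 : α → α
  s1 : α → α
  s2 : α → α
  isolated : Finset (Finset α)

namespace Ribbon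

variable {α : Type}

/-- One step of any of the maps in `fs`, within the set `F`. -/
def Step (F : Finset α) (fs : List (α → α)) (x y : α) : Prop :=
  x ∈ F ∧ y ∈ F ∧ ∃ s ∈ fs, s x = y

/-- The orbit equivalence relation on `F` generated by the maps in `fs`. -/
def Orb (F : Finset α) (fs : List (α → α)) (x y : α) : Prop :=
  Relation.EqvGen (Step F fs) x y

/-- The orbit of `x` in `F` under the maps `fs`. -/
def orbitOf (F : Finset α) (fs : List (α → α)) (x : α) : Finset α :=
  F.filter (fun y => Orb F fs x y)

/-- All orbits of the maps `fs` on `F`. -/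
def orbits (F : Finset α) (fs : List (α → α)) : Finset (Finset α) :=
  F.image (orbitOf F fs)

variable (G : Ribbon α)

/-- The vertices carrying flags: orbits of `⟨s1,s2⟩`. -/
def vertexOrbits : Finset (Finset α) := orbits G.flags [G.s1, G.s2]

/-- The edges: orbits of `⟨s0,s2⟩`. -/
def edgeSet : Finset (Finset α) := orbits G.flags [G.s0, G.s2]

/-- The boundary components consisting of flags: orbits of `⟨s0,s1⟩`. -/
def boundaryOrbits : Finset (Finset α) := orbits G.flags [G.s0, G.s1]

/-- The connected components carrying flags: orbits of `⟨s0,s1,s2⟩`. -/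
def compOrbits : Finset (Finset α) := orbits G.flags [G.s0, G.s1, G.s2]

/-- The vertex set: vertex orbits together with the isolated vertices. -/
def vertexSet : Finset (Finset α) := G.vertexOrbits ∪ G.isolated

/-- The boundary components: boundary orbits plus one per isolated vertex. -/
def bSet : Finset (Finset α) := G.boundaryOrbits ∪ G.isolated

/-- The connected components: flag components plus the isolated vertices. -/
def compSet : Finset (Finset α) := G.compOrbits ∪ G.isolated

/-- `v(𝔾)`, the number of vertices. -/
def numV : ℕ := G.vertexSet.card
/-- `e(𝔾)`, the number of edges. -/
def numE : ℕ := G.edgeSet.card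
/-- `b(𝔾)`, the number of boundary components. -/
def numB : ℕ := G.bSet.card
/-- `k(𝔾)`, the number of connected components. -/
def numK : ℕ := G.compSet.card

/-- Connectedness of a ribbon graph. -/
def Connected : Prop := G.numK = 1

/-- Euler genus `γ(𝔾) = 2k(𝔾) − v(𝔾) + e(𝔾) − b(𝔾)`. -/
def eulerGenus : ℤ :=
  2 * (G.numK : ℤ) - (G.numV : ℤ) + (G.numE : ℤ) - (G.numB : ℤ)

/-- The axioms making the combinatorial data a genuine ribbon graph:
`s0,s1,s2` are involutions of the flag set (and the identity elsewhere),
`s0` and `s2` commute, and `s0 ∘ s2` is fixed-point-free. -/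
def IsRibbon : Prop :=
  (∀ f ∈ G.flags, G.s0 f ∈ G.flags ∧ G.s1 f ∈ G.flags ∧ G.s2 f ∈ G.flags) ∧
  (∀ f ∈ G.flags, G.s0 (G.s0 f) = f ∧ G.s1 (G.s1 f) = f ∧ G.s2 (G.s2 f) = f) ∧
  (∀ f, f ∉ G.flags → G.s0 f = f ∧ G.s1 f = f ∧ G.s2 f = f) ∧
  (∀ f ∈ G.flags, G.s0 (G.s2 f) = G.s2 (G.s0 f)) ∧
  (∀ f ∈ G.flags, G.s0 (G.s2 f) ≠ f)

/-- The flags lying on the edges of `A`. -/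
def flagsOf (A : Finset (Finset α)) : Finset α := A.biUnion id

/-- The partial dual `𝔾^A`: on the flags of edges of `A` the maps `s0` and `s2`
are interchanged; all other data is unchanged. -/
def partialDual (A : Finset (Finset α)) : Ribbon α where
  flags := G.flags
  s0 := fun f => if f ∈ G.flags then (if f ∈ flagsOf A then G.s2 f else G.s0 f) else f
  s1 := G.s1
  s2 := fun f => if f ∈ G.flags then (if f ∈ flagsOf A then G.s0 f else G.s2 f) else f
  isolated := G.isolated

/-- The geometric dual `𝔾* = 𝔾^{E(𝔾)}`. -/
def dual : Ribbon α := G.partialDual G.edgeSet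

/-- The first iterate of `step` starting from `a` that lies in `keep`. -/
def firstIn (keep : Finset α) (step : α → α) (a : α) : α :=
  if h : ∃ k, step^[k] a ∈ keep then step^[Nat.find h] a else a

/-- Deletion `𝔾 ∖ A` of a set `A` of edges: the flags of the edges of `A` are
removed, `s1` is closed up accordingly (walking on around the vertex past
deleted edge ends), and vertices losing all their flags become isolated
vertices. -/
def delete (A : Finset (Finset α)) : Ribbon α :=
  let keep := G.flags \ flagsOf A
  { flags := keep
    s0 := fun f => if f ∈ keep then G.s0 f else f
    s1 := fun f => if f ∈ keep then firstIn keep (fun g => G.s1 (G.s2 g)) (G.s1 f) else f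
    s2 := fun f => if f ∈ keep then G.s2 f else f
    isolated := G.isolated ∪ G.vertexOrbits.filter (fun v => v ∩ keep = ∅) }

/-- The spanning ribbon subgraph `𝔾|A := 𝔾 ∖ (E(𝔾) ∖ A)`. -/
def restrict (A : Finset (Finset α)) : Ribbon α :=
  G.delete (G.edgeSet \ A)

/-- Contraction `𝔾/A := (𝔾* ∖ A)*`. -/
def contract (A : Finset (Finset α)) : Ribbon α :=
  (G.dual.delete A).dual

/-- An edge is a loop if all its flags lie on a single vertex. -/
def IsLoop (e : Finset α) : Prop :=
  e ∈ G.edgeSet ∧ ∀ f ∈ e, ∀ g ∈ e, Orb G.flags [G.s1, G.s2] f g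

/-- An edge is a bridge if deleting it increases the number of connected components. -/
def IsBridge (e : Finset α) : Prop :=
  e ∈ G.edgeSet ∧ (G.delete {e}).numK > G.numK

/-- A loop is plane if contracting it increases the number of connected components. -/
def IsPlaneLoop (e : Finset α) : Prop :=
  G.IsLoop e ∧ (G.contract {e}).numK > G.numK

/-- A loop is non-orientable if together with its vertex it forms a Möbius band,
i.e. the union of the vertex disc and the edge has a single boundary component. -/
def IsNonorientableLoop (e : Finset α) : Prop :=
  G.IsLoop e ∧
    (((G.restrict {e}).bSet).filter (fun b => ∃ f ∈ b, f ∈ e)).card = 1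

/-- Two loops at the same vertex are interlaced if, travelling around the
boundary of the vertex (the cyclic order of edge ends being given by iterating
`s2 ∘ s1`), their ends are met in the cyclic order `e f e f`: between two
consecutive ends of `e` lies exactly one end of `f`. -/
def Interlaced (e f : Finset α) : Prop :=
  e ≠ f ∧ G.IsLoop e ∧ G.IsLoop f ∧
  (∃ x ∈ e, ∃ y ∈ f, Orb G.flags [G.s1, G.s2] x y) ∧
  ∃ x ∈ e, ∃ m : ℕ, 0 < m ∧ (fun g => G.s2 (G.s1 g))^[m] x ∈ e ∧
    (∀ k, 0 < k → k < m → (fun g => G.s2 (G.s1 g))^[k] x ∉ e) ∧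
    (∃! j, 0 < j ∧ j < m ∧ (fun g => G.s2 (G.s1 g))^[j] x ∈ f)

/-- The quasi-trees of `𝔾`, recorded by their edge sets: the edge sets of the
spanning ribbon subgraphs having exactly one boundary component. -/
def quasiTrees : Finset (Finset (Finset α)) :=
  G.edgeSet.powerset.filter (fun A => (G.restrict A).numB = 1)

/-- `e` links `f` with respect to the quasi-tree with edge set `Q` if `e` and
`f` are interlaced loops in the partial dual `𝔾^{E(Q)}`. -/
def Links (Q : Finset (Finset α)) (e f : Finset α) : Prop :=
  (G.partialDual Q).Interlaced e f

/-- An edge is live w.r.t. `Q` if it links no `lt`-smaller edge; otherwise it is dead. -/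
def Live (lt : Finset α → Finset α → Prop) (Q : Finset (Finset α)) (e : Finset α) : Prop :=
  ∀ f ∈ G.edgeSet, lt f e → ¬ G.Links Q e f

/-- An edge is non-orientable w.r.t. `Q` if it is a non-orientable loop in `𝔾^{E(Q)}`. -/
def NonorientableWrt (Q : Finset (Finset α)) (e : Finset α) : Prop :=
  (G.partialDual Q).IsNonorientableLoop e

/-- `D_Q`: the set of internally dead edges. -/
def DInt (lt : Finset α → Finset α → Prop) (Q : Finset (Finset α)) : Finset (Finset α) :=
  Q.filter (fun e => ¬ G.Live lt Q e)

/-- `D_Q^*`: the set of externally dead edges. -/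
def DExt (lt : Finset α → Finset α → Prop) (Q : Finset (Finset α)) : Finset (Finset α) :=
  (G.edgeSet \ Q).filter (fun e => ¬ G.Live lt Q e)

/-- `O_Q`: the set of internally live orientable edges. -/
def OInt (lt : Finset α → Finset α → Prop) (Q : Finset (Finset α)) : Finset (Finset α) :=
  Q.filter (fun e => G.Live lt Q e ∧ ¬ G.NonorientableWrt Q e)

/-- `O_Q^*`: the set of externally live orientable edges. -/
def OExt (lt : Finset α → Finset α → Prop) (Q : Finset (Finset α)) : Finset (Finset α) :=
  (G.edgeSet \ Q).filter (fun e => G.Live lt Q e ∧ ¬ G.NonorientableWrt Q e)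

/-- `N_Q`: the set of internally live non-orientable edges. -/
def NInt (lt : Finset α → Finset α → Prop) (Q : Finset (Finset α)) : Finset (Finset α) :=
  Q.filter (fun e => G.Live lt Q e ∧ G.NonorientableWrt Q e)

/-- `N_Q^*`: the set of externally live non-orientable edges. -/
def NExt (lt : Finset α → Finset α → Prop) (Q : Finset (Finset α)) : Finset (Finset α) :=
  (G.edgeSet \ Q).filter (fun e => G.Live lt Q e ∧ G.NonorientableWrt Q e)

end Ribbon

variable {α : Type}

/-- Adjacency of two blocks of a partition through an edge in `A`:
the edge has an end (a member of the block, i.e. a vertex or boundary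
component, meeting the edge's flags) in each block. -/
def padj (A : Finset (Finset α)) (B C : Finset (Finset α)) : Prop :=
  ∃ e ∈ A, (∃ v ∈ B, (v ∩ e).Nonempty) ∧ (∃ v ∈ C, (v ∩ e).Nonempty)

/-- The connected components of the packaging `G(𝔾|A;𝒱)`: the multigraph with
vertex set the blocks of `VP` and one edge per edge in `A`. -/
def pcomps (VP : Finset (Finset (Finset α))) (A : Finset (Finset α)) :
    Finset (Finset (Finset (Finset α))) :=
  VP.image (fun B => VP.filter (fun C => Relation.EqvGen (padj A) B C))

/-- The nullity `n = e − v + k` of the packaging `G(𝔾|A;𝒱)`. -/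
def pnull (VP : Finset (Finset (Finset α))) (A : Finset (Finset α)) : ℕ :=
  A.card + (pcomps VP A).card - VP.card

/-- The edges of `A` incident with the set of blocks `K`. -/
def edgesOf (A : Finset (Finset α)) (K : Finset (Finset (Finset α))) : Finset (Finset α) :=
  A.filter (fun e => ∃ B ∈ K, ∃ v ∈ B, (v ∩ e).Nonempty)

/-- `b(𝔾[K])`: the number of boundary components of the ribbon subgraph of `𝔾`
induced by the blocks in `K`, whose edge set is `EK`: the boundary components of
`𝔾|EK` consisting of flags of `EK`, plus one for each vertex lying in a block of
`K` and carrying no flag of an edge of `EK`. -/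
def bInd (G : Ribbon α) (K : Finset (Finset (Finset α))) (EK : Finset (Finset α)) : ℕ :=
  (((G.restrict EK).bSet).filter (fun b => ∃ f ∈ b, f ∈ Ribbon.flagsOf EK)).card +
  ((K.biUnion id).filter (fun v => v ∩ Ribbon.flagsOf EK = ∅)).card

/-- `γ(𝔾,K) = 2k(K) + e(K) − v(K) + ω(K) − b(𝔾[K])` for a set `K` of blocks of a
weighted partition, with incident edge set `EK`. -/
def gammaC (G : Ribbon α) (w : Finset (Finset α) → ℕ)
    (K : Finset (Finset (Finset α))) (EK : Finset (Finset α)) : ℤ :=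
  2 * ((pcomps K EK).card : ℤ) + (EK.card : ℤ) - (K.card : ℤ) +
    (∑ B ∈ K, (w B : ℤ)) - (bInd G K EK : ℤ)

/-- A packaged ribbon graph `𝔾̲ = (𝔾,𝒱,ω_𝒱,ℬ,ω_ℬ)`: a ribbon graph together with
a weighted partition of its vertex set and a weighted partition of its set of
boundary components. -/
structure PRibbon (α : Type) where
  G : Ribbon α
  VP : Finset (Finset (Finset α))
  wV : Finset (Finset α) → ℕ
  BP : Finset (Finset (Finset α))
  wB : Finset (Finset α) → ℕ

/-- `Bl` is a partition of `S`. -/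
def IsPartition {β : Type} (Bl : Finset (Finset β)) (S : Finset β) : Prop :=
  (∀ b ∈ Bl, b.Nonempty) ∧ Bl.biUnion id = S ∧
  (∀ b ∈ Bl, ∀ c ∈ Bl, b ≠ c → Disjoint b c)

/-- The conditions for a packaged ribbon graph to be genuine. -/
def PRibbon.IsPacked (P : PRibbon α) : Prop :=
  P.G.IsRibbon ∧ IsPartition P.VP P.G.vertexSet ∧ IsPartition P.BP P.G.bSet

/-- The packaged surface Tutte polynomial `T(𝔾̲;x,y)`, evaluated in a commutative
ring at values `x`, `y` and `xv i`, `yv i` for the variables `x_i, y_i` (`i ∈ ℤ`):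
`T(𝔾̲;x,y) = ∑_{A⊆E} x^{n(G(𝔾*|Aᶜ;ℬ))} y^{n(G(𝔾|A;𝒱))}
∏_H x_{γ(𝔾*,H)} ∏_K y_{γ(𝔾,K)}`. -/
def pst {R : Type} [CommRing R] (P : PRibbon α) (x y : R) (xv yv : ℤ → R) : R :=
  ∑ A ∈ P.G.edgeSet.powerset,
    x ^ pnull P.BP (P.G.edgeSet \ A) * y ^ pnull P.VP A *
    (∏ H ∈ pcomps P.BP (P.G.edgeSet \ A),
        xv (gammaC P.G.dual P.wB H (edgesOf (P.G.edgeSet \ A) H))) *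
    ∏ K ∈ pcomps P.VP A, yv (gammaC P.G P.wV K (edgesOf A K))

namespace PRibbon

/-- Transport of a block along deletion/contraction: the members of the new
vertex (or boundary component) set contained in a member of the old block. -/
def transport (S : Finset (Finset α)) (Blk : Finset (Finset α)) : Finset (Finset α) :=
  S.filter (fun v' => ∃ v ∈ Blk, v' ⊆ v)

/-- Packaged deletion `𝔾̲ ∖ e`: delete `e` from the ribbon graph, keep the vertex
partition and its weights, and in the boundary partition merge the block(s)
meeting `e` with the newly created boundary component(s): if two distinct blocks
were met, the merged block gets the sum of their weights, and otherwise the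
weight of the old block increases by `1`; all other blocks and weights are
unchanged. -/
def del (P : PRibbon α) (e : Finset α) : PRibbon α :=
  let G' := P.G.delete {e}
  let S := P.G.bSet.filter (fun b => (b ∩ e).Nonempty)
  let Blks := P.BP.filter (fun Blk => ∃ b ∈ Blk, (b ∩ e).Nonempty)
  let merged := (Blks.biUnion id ∪ (G'.bSet \ P.G.bSet)) \ S
  { G := G'
    VP := P.VP.image (transport G'.vertexSet)
    wV := fun B' => ∑ Blk ∈ P.VP.filter (fun Blk => transport G'.vertexSet Blk = B'), P.wV Blk
    BP := (P.BP \ Blks) ∪ {merged}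
    wB := fun B' =>
      if B' = merged then
        (if Blks.card = 2 then ∑ Blk ∈ Blks, P.wB Blk else (∑ Blk ∈ Blks, P.wB Blk) + 1)
      else P.wB B' }

/-- Packaged contraction `𝔾̲ / e`: contract `e` in the ribbon graph, keep the
boundary partition and its weights under the natural correspondence of boundary
components, and in the vertex partition merge the block(s) meeting `e` with the
newly created vertex (or vertices): if two distinct blocks were met, the merged
block gets the sum of their weights, and otherwise the weight of the old block
increases by `1`; all other blocks and weights are unchanged. -/
def con (P : PRibbon α) (e : Finset α) : PRibbon α :=
  let G' := P.G.contract {e}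
  let S := P.G.vertexSet.filter (fun v => (v ∩ e).Nonempty)
  let Blks := P.VP.filter (fun Blk => ∃ v ∈ Blk, (v ∩ e).Nonempty)
  let merged := (Blks.biUnion id ∪ (G'.vertexSet \ P.G.vertexSet)) \ S
  { G := G'
    VP := (P.VP \ Blks) ∪ {merged}
    wV := fun B' =>
      if B' = merged then
        (if Blks.card = 2 then ∑ Blk ∈ Blks, P.wV Blk else (∑ Blk ∈ Blks, P.wV Blk) + 1)
      else P.wV B'
    BP := P.BP.image (transport G'.bSet)
    wB := fun B' => ∑ Blk ∈ P.BP.filter (fun Blk => transport G'.bSet Blk = B'), P.wB Blk }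

/-- Deletion of a set of edges, one edge at a time. -/
def delSet (P : PRibbon α) (A : Finset (Finset α)) : PRibbon α :=
  A.toList.foldl PRibbon.del P

/-- Contraction of a set of edges, one edge at a time. -/
def conSet (P : PRibbon α) (A : Finset (Finset α)) : PRibbon α :=
  A.toList.foldl PRibbon.con P

end PRibbon

/-- The generalised Krushkal polynomial `P(𝔾;α,β,a,b)`, evaluated in a field at
`al = α`, `be = β` and at square roots `sa, sb` of `a, b`
(so that `a^{γ/2} = sa^γ` and `b^{γ/2} = sb^γ`):
`P(𝔾;α,β,a,b) = ∑_{A⊆E} α^{k(𝔾|A)−k(𝔾)} β^{k(𝔾*|Aᶜ)−k(𝔾*)} a^{γ(𝔾|A)/2} b^{γ(𝔾*|Aᶜ)/2}`. -/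
def krushkal {R : Type} [Field R] (G : Ribbon α) (al be sa sb : R) : R :=
  ∑ A ∈ G.edgeSet.powerset,
    al ^ ((G.restrict A).numK - G.numK) *
    be ^ ((G.dual.restrict (G.edgeSet \ A)).numK - G.dual.numK) *
    sa ^ (G.restrict A).eulerGenus *
    sb ^ (G.dual.restrict (G.edgeSet \ A)).eulerGenus

/-- Adjacency of two vertices of an abstract multigraph through an edge of `E`,
for a given incidence relation. -/
def relAdj {β ε : Type} (E : Finset ε) (inc : β → ε → Prop) (u v : β) : Prop :=
  ∃ e ∈ E, inc u e ∧ inc v e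

/-- The number `k(G|A)` of connected components of the spanning subgraph with
edge set `A` of the multigraph with vertex set `V` and incidence relation `inc`. -/
def kRel {β ε : Type} (V : Finset β) (A : Finset ε) (inc : β → ε → Prop) : ℕ :=
  (V.image (fun u => V.filter (fun v => Relation.EqvGen (relAdj A inc) u v))).card

/-- The Tutte polynomial `T(G;x,y) = ∑_{A⊆E} (x−1)^{k(G|A)−k(G)} (y−1)^{n(G|A)}`
of the multigraph with vertex set `V`, edge set `E` and incidence relation
`inc`, where `n(G|A) = |A| − v(G) + k(G|A)`. -/
def tutteRel {β ε : Type} {R : Type} [CommRing R]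
    (V : Finset β) (E : Finset ε) (inc : β → ε → Prop) (x y : R) : R :=
  ∑ A ∈ E.powerset,
    (x - 1) ^ (kRel V A inc - kRel V E inc) * (y - 1) ^ (A.card + kRel V A inc - V.card)

/-- Incidence between a connected component `u` of a ribbon subgraph of `G`
(or an isolated-vertex label) and an edge `e` of `G`: `e` has a flag lying on a
vertex of `G` meeting `u`. -/
def incCompG (G : Ribbon α) (u e : Finset α) : Prop :=
  ∃ f ∈ e, ∃ g ∈ u, Ribbon.Orb G.flags [G.s1, G.s2] f g

end QTE

namespace QTE

section Helpers
open Ribbon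

variable {α : Type}

lemma ribbon_ext {G H : Ribbon α} (h1 : G.flags = H.flags) (h2 : G.s0 = H.s0)
    (h3 : G.s1 = H.s1) (h4 : G.s2 = H.s2) (h5 : G.isolated = H.isolated) : G = H := by
  cases G; cases H; simp_all

lemma flagsOf_singleton (e : Finset α) : flagsOf ({e} : Finset (Finset α)) = e := by
  simp [flagsOf]

lemma mem_orbitOf_self {F : Finset α} {fs : List (α → α)} {x : α} (hx : x ∈ F) :
    x ∈ orbitOf F fs x :=
  Finset.mem_filter.2 ⟨hx, Relation.EqvGen.refl x⟩

lemma flagsOf_edgeSet (X : Ribbon α) : flagsOf X.edgeSet = X.flags := by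
  ext f
  simp only [flagsOf, Ribbon.edgeSet, orbits, Finset.mem_biUnion, Finset.mem_image, id_eq]
  constructor
  · rintro ⟨a, ⟨x, hx, rfl⟩, hf⟩
    exact (Finset.mem_filter.1 hf).1
  · intro hf
    exact ⟨_, ⟨f, hf, rfl⟩, mem_orbitOf_self hf⟩

lemma iterate_eq_of_notin {keep : Finset α} {f g : α → α}
    (hfg : ∀ x ∉ keep, f x = g x) (a : α) :
    ∀ k, (∀ j, j < k → f^[j] a ∉ keep) → f^[k] a = g^[k] a := by
  intro k
  induction k with
  | zero => intro _; rfl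
  | succ n ih =>
    intro h
    have h1 : f^[n] a = g^[n] a := ih fun j hj => h j (hj.trans (Nat.lt_succ_self n))
    rw [Function.iterate_succ_apply', Function.iterate_succ_apply', h1,
      hfg _ (h1 ▸ h n (Nat.lt_succ_self n))]

lemma exists_iterate_mem {keep : Finset α} {f g : α → α}
    (hfg : ∀ x ∉ keep, f x = g x) (a : α)
    (h : ∃ k, f^[k] a ∈ keep) : ∃ k, g^[k] a ∈ keep := by
  refine ⟨Nat.find h, ?_⟩
  rw [← iterate_eq_of_notin hfg a (Nat.find h) fun j hj => Nat.find_min h hj]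
  exact Nat.find_spec h

lemma firstIn_congr {keep : Finset α} {f g : α → α}
    (hfg : ∀ x ∉ keep, f x = g x) (a : α) :
    firstIn keep f a = firstIn keep g a := by
  have hgf : ∀ x ∉ keep, g x = f x := fun x hx => (hfg x hx).symm
  unfold firstIn
  by_cases h : ∃ k, f^[k] a ∈ keep
  · have h' : ∃ k, g^[k] a ∈ keep := exists_iterate_mem hfg a h
    rw [dif_pos h, dif_pos h']
    have heq : ∀ j, j ≤ Nat.find h → f^[j] a = g^[j] a := fun j hj =>
      iterate_eq_of_notin hfg a j fun i hi => Nat.find_min h (lt_of_lt_of_le hi hj)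
    have hle : Nat.find h' ≤ Nat.find h := Nat.find_min' h' (by
      rw [← heq _ le_rfl]; exact Nat.find_spec h)
    have hge : Nat.find h ≤ Nat.find h' := by
      by_contra hlt
      push_neg at hlt
      have hsp := Nat.find_spec h'
      rw [← heq _ (le_of_lt hlt)] at hsp
      exact Nat.find_min h hlt hsp
    have hfind : Nat.find h' = Nat.find h := le_antisymm hle hge
    rw [hfind]
    exact heq _ le_rfl
  · have h' : ¬ ∃ k, g^[k] a ∈ keep := fun hg => h (exists_iterate_mem hgf a hg)
    rw [dif_neg h, dif_neg h']

lemma orbitOf_subset_congr {F K : Finset α} {fs1 fs2 : List (α → α)}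
    (hsym2 : ∀ a b, Step F fs2 a b → Step F fs2 b a)
    (hag : ∀ a ∉ K, ∀ b, Step F fs1 a b ↔ Step F fs2 a b)
    {x : α} (hx : x ∈ F)
    (hsub : ∀ y ∈ orbitOf F fs1 x, y ∉ K) :
    orbitOf F fs2 x ⊆ orbitOf F fs1 x := by
  intro y hy
  rw [orbitOf, Finset.mem_filter] at hy
  have key : ∀ a b, Orb F fs2 a b →
      (a ∈ orbitOf F fs1 x → b ∈ orbitOf F fs1 x) ∧
      (b ∈ orbitOf F fs1 x → a ∈ orbitOf F fs1 x) := by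
    intro a b h
    have h' : Relation.EqvGen (Step F fs2) a b := h
    clear h
    induction h' with
    | rel a b hab =>
      constructor
      · intro ha
        have h1 : Step F fs1 a b := (hag a (hsub a ha) b).2 hab
        have hmem := Finset.mem_filter.1 ha
        exact Finset.mem_filter.2
          ⟨h1.2.1, Relation.EqvGen.trans _ _ _ hmem.2 (Relation.EqvGen.rel _ _ h1)⟩
      · intro hb
        have hba := hsym2 a b hab
        have h1 : Step F fs1 b a := (hag b (hsub b hb) a).2 hba
        have hmem := Finset.mem_filter.1 hb
        exact Finset.mem_filter.2
          ⟨h1.2.1, Relation.EqvGen.trans _ _ _ hmem.2 (Relation.EqvGen.rel _ _ h1)⟩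
    | refl a => exact ⟨id, id⟩
    | symm a b _ ih => exact ⟨ih.2, ih.1⟩
    | trans a b c _ _ ih1 ih2 => exact ⟨fun h => ih2.1 (ih1.1 h), fun h => ih1.2 (ih2.2 h)⟩
  exact (key x y hy.2).1 (mem_orbitOf_self hx)

lemma orbitOf_congr {F K : Finset α} {fs1 fs2 : List (α → α)}
    (hsym1 : ∀ a b, Step F fs1 a b → Step F fs1 b a)
    (hsym2 : ∀ a b, Step F fs2 a b → Step F fs2 b a)
    (hag : ∀ a ∉ K, ∀ b, Step F fs1 a b ↔ Step F fs2 a b)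
    {x : α} (hx : x ∈ F)
    (hsub : ∀ y ∈ orbitOf F fs1 x, y ∉ K) :
    orbitOf F fs2 x = orbitOf F fs1 x := by
  have h1 := orbitOf_subset_congr hsym2 hag hx hsub
  have hag' : ∀ a ∉ K, ∀ b, Step F fs2 a b ↔ Step F fs1 a b := fun a ha b => (hag a ha b).symm
  have h2 := orbitOf_subset_congr hsym1 hag' hx (fun y hy => hsub y (h1 hy))
  exact le_antisymm h1 h2

lemma orbits_filter_congr {F K : Finset α} {fs1 fs2 : List (α → α)}
    (hsym1 : ∀ a b, Step F fs1 a b → Step F fs1 b a)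
    (hsym2 : ∀ a b, Step F fs2 a b → Step F fs2 b a)
    (hag : ∀ a ∉ K, ∀ b, Step F fs1 a b ↔ Step F fs2 a b) :
    (orbits F fs1).filter (fun v => v ∩ K = ∅) =
    (orbits F fs2).filter (fun v => v ∩ K = ∅) := by
  have main : ∀ (gs1 gs2 : List (α → α)),
      (∀ a b, Step F gs1 a b → Step F gs1 b a) →
      (∀ a b, Step F gs2 a b → Step F gs2 b a) →
      (∀ a ∉ K, ∀ b, Step F gs1 a b ↔ Step F gs2 a b) →
      (orbits F gs1).filter (fun v => v ∩ K = ∅) ⊆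
      (orbits F gs2).filter (fun v => v ∩ K = ∅) := by
    intro gs1 gs2 hs1 hs2 hg v hv
    rw [Finset.mem_filter] at hv
    obtain ⟨x, hx, rfl⟩ := Finset.mem_image.1 hv.1
    have hsub : ∀ y ∈ orbitOf F gs1 x, y ∉ K := by
      intro y hy hyK
      exact (Finset.eq_empty_iff_forall_notMem.1 hv.2 y) (Finset.mem_inter.2 ⟨hy, hyK⟩)
    have heq := orbitOf_congr hs1 hs2 hg hx hsub
    rw [Finset.mem_filter]
    exact ⟨Finset.mem_image.2 ⟨x, hx, heq⟩, heq ▸ hv.2⟩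
  exact le_antisymm (main fs1 fs2 hsym1 hsym2 hag)
    (main fs2 fs1 hsym2 hsym1 (fun a ha b => (hag a ha b).symm))

lemma step_symm_of {F : Finset α} {fs : List (α → α)}
    (h : ∀ s ∈ fs, ∀ a ∈ F, s (s a) = a) :
    ∀ a b, Step F fs a b → Step F fs b a := by
  rintro a b ⟨ha, hb, s, hs, rfl⟩
  exact ⟨hb, ha, s, hs, h s hs a ha⟩

lemma step_iff_of_eq {F : Finset α} {u1 u2 v1 v2 : α → α} {a : α}
    (h1 : a ∈ F → u1 a = v1 a) (h2 : a ∈ F → u2 a = v2 a) (b : α) :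
    Step F [u1, u2] a b ↔ Step F [v1, v2] a b := by
  constructor <;> rintro ⟨ha, hb, s, hs, rfl⟩ <;>
    simp only [List.mem_cons, List.not_mem_nil, or_false, List.mem_singleton] at hs
  · rcases hs with rfl | rfl
    · exact ⟨ha, hb, v1, by simp, (h1 ha).symm⟩
    · exact ⟨ha, hb, v2, by simp, (h2 ha).symm⟩
  · rcases hs with rfl | rfl
    · exact ⟨ha, hb, u1, by simp, h1 ha⟩
    · exact ⟨ha, hb, u2, by simp, h2 ha⟩

lemma orbitOf_eq_of_mem {F : Finset α} {fs : List (α → α)} {x y : α}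
    (h : y ∈ orbitOf F fs x) : orbitOf F fs y = orbitOf F fs x := by
  rw [orbitOf, Finset.mem_filter] at h
  ext z
  simp only [orbitOf, Finset.mem_filter, and_congr_right_iff]
  intro _
  exact ⟨fun hyz => Relation.EqvGen.trans _ _ _ h.2 hyz,
    fun hxz => Relation.EqvGen.trans _ _ _ (Relation.EqvGen.symm _ _ h.2) hxz⟩

lemma edge_eq_of_mem {G : Ribbon α} {e a : Finset α} (he : e ∈ G.edgeSet)
    (ha : a ∈ G.edgeSet) {f : α} (hfe : f ∈ e) (hfa : f ∈ a) : e = a := by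
  obtain ⟨x, hx, rfl⟩ := Finset.mem_image.1 he
  obtain ⟨y, hy, rfl⟩ := Finset.mem_image.1 ha
  rw [← orbitOf_eq_of_mem hfe, ← orbitOf_eq_of_mem hfa]

lemma notMem_flagsOf {G : Ribbon α} {A : Finset (Finset α)} {e : Finset α}
    (he : e ∈ G.edgeSet) (hA : A ⊆ G.edgeSet) (heA : e ∉ A) {f : α} (hf : f ∈ e) :
    f ∉ flagsOf A := by
  intro hfA
  obtain ⟨a, haA, hfa⟩ := Finset.mem_biUnion.1 hfA
  exact heA ((edge_eq_of_mem he (hA haA) hf hfa) ▸ haA)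

lemma flagsOf_closed {G : Ribbon α} (hG : G.IsRibbon) {A : Finset (Finset α)}
    (hA : A ⊆ G.edgeSet) {f : α} (hf : f ∈ flagsOf A) :
    f ∈ G.flags ∧ G.s0 f ∈ flagsOf A ∧ G.s2 f ∈ flagsOf A := by
  obtain ⟨a, haA, hfa⟩ := Finset.mem_biUnion.1 hf
  obtain ⟨x, hx, rfl⟩ := Finset.mem_image.1 (hA haA)
  have hfa' := Finset.mem_filter.1 hfa
  refine ⟨hfa'.1, ?_, ?_⟩
  · refine Finset.mem_biUnion.2 ⟨_, haA, ?_⟩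
    refine Finset.mem_filter.2 ⟨(hG.1 f hfa'.1).1, ?_⟩
    exact Relation.EqvGen.trans _ _ _ hfa'.2
      (Relation.EqvGen.rel _ _ ⟨hfa'.1, (hG.1 f hfa'.1).1, G.s0, by simp, rfl⟩)
  · refine Finset.mem_biUnion.2 ⟨_, haA, ?_⟩
    refine Finset.mem_filter.2 ⟨(hG.1 f hfa'.1).2.2, ?_⟩
    exact Relation.EqvGen.trans _ _ _ hfa'.2
      (Relation.EqvGen.rel _ _ ⟨hfa'.1, (hG.1 f hfa'.1).2.2, G.s2, by simp, rfl⟩)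

end Helpers

/-- Partial duality commutes with deletion and contraction: for
every ribbon graph `𝔾`, every `A ⊆ E(𝔾)` and every edge `e ∉ A`, one has
`(𝔾∖e)^A = 𝔾^A ∖ e` and `(𝔾/e)^A = 𝔾^A / e`. -/
theorem partialDual_delete_contract_comm {α : Type} (G : Ribbon α) (hG : G.IsRibbon)
    (A : Finset (Finset α)) (hA : A ⊆ G.edgeSet)
    (e : Finset α) (he : e ∈ G.edgeSet) (heA : e ∉ A) :
    (G.delete {e}).partialDual A = (G.partialDual A).delete {e} ∧
    (G.contract {e}).partialDual A = (G.partialDual A).contract {e} := by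
  classical
  obtain ⟨hmap, hinv, hout, hcomm, hfpf⟩ := hG
  have hG' : G.IsRibbon := ⟨hmap, hinv, hout, hcomm, hfpf⟩
  have hdisj : ∀ f ∈ e, f ∉ Ribbon.flagsOf A := fun f hf => notMem_flagsOf he hA heA hf
  have hclos : ∀ {f}, f ∈ Ribbon.flagsOf A →
      f ∈ G.flags ∧ G.s0 f ∈ Ribbon.flagsOf A ∧ G.s2 f ∈ Ribbon.flagsOf A :=
    fun hf => flagsOf_closed hG' hA hf
  constructor
  · apply ribbon_ext
    · simp [Ribbon.delete, Ribbon.partialDual, flagsOf_singleton]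
    · funext f
      by_cases hfF : f ∈ G.flags
      · by_cases hfe : f ∈ e
        · simp [Ribbon.delete, Ribbon.partialDual, flagsOf_singleton, hfF, hfe]
        · by_cases hfA : f ∈ Ribbon.flagsOf A <;>
            simp [Ribbon.delete, Ribbon.partialDual, flagsOf_singleton, hfF, hfe, hfA]
      · simp [Ribbon.delete, Ribbon.partialDual, flagsOf_singleton, hfF]
    · funext f
      by_cases hfF : f ∈ G.flags
      · by_cases hfe : f ∈ e
        · simp [Ribbon.delete, Ribbon.partialDual, flagsOf_singleton, hfF, hfe]
        · simp only [Ribbon.delete, Ribbon.partialDual, flagsOf_singleton]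
          simp [hfF, hfe]
          refine firstIn_congr (fun x hx => ?_) _
          by_cases hxF : x ∈ G.flags
          · have hxe : x ∈ e := by
              by_contra hxe
              exact hx (Finset.mem_sdiff.2 ⟨hxF, hxe⟩)
            simp [hxF, hdisj x hxe]
          · simp [hxF, (hout x hxF).2.2]
      · simp [Ribbon.delete, Ribbon.partialDual, flagsOf_singleton, hfF]
    · funext f
      by_cases hfF : f ∈ G.flags
      · by_cases hfe : f ∈ e
        · simp [Ribbon.delete, Ribbon.partialDual, flagsOf_singleton, hfF, hfe]
        · by_cases hfA : f ∈ Ribbon.flagsOf A <;>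
            simp [Ribbon.delete, Ribbon.partialDual, flagsOf_singleton, hfF, hfe, hfA]
      · simp [Ribbon.delete, Ribbon.partialDual, flagsOf_singleton, hfF]
    · simp only [Ribbon.delete, Ribbon.partialDual, Ribbon.vertexOrbits, flagsOf_singleton]
      congr 1
      apply orbits_filter_congr
      · refine step_symm_of ?_
        intro s hs a ha
        simp only [List.mem_cons, List.not_mem_nil, or_false, List.mem_singleton] at hs
        rcases hs with rfl | rfl
        · exact (hinv a ha).2.1
        · exact (hinv a ha).2.2
      · refine step_symm_of ?_
        intro s hs a ha
        simp only [List.mem_cons, List.not_mem_nil, or_false, List.mem_singleton] at hs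
        rcases hs with rfl | rfl
        · exact (hinv a ha).2.1
        · by_cases haA : a ∈ Ribbon.flagsOf A
          · have h0F := (hmap a ha).1
            have h0A := (hclos haA).2.1
            simp [ha, haA, h0F, h0A, (hinv a ha).1]
          · have h2F := (hmap a ha).2.2
            have h2A : G.s2 a ∉ Ribbon.flagsOf A :=
              fun hmem => haA (((hinv a ha).2.2) ▸ (hclos hmem).2.2)
            simp [ha, haA, h2F, h2A, (hinv a ha).2.2]
      · intro a ha b
        by_cases haF : a ∈ G.flags
        · have hae : a ∈ e := by
            by_contra hae
            exact ha (Finset.mem_sdiff.2 ⟨haF, hae⟩)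
          exact step_iff_of_eq (fun _ => rfl) (fun _ => by simp [haF, hdisj a hae]) b
        · constructor <;> exact fun h => absurd h.1 haF
  · apply ribbon_ext
    · simp [Ribbon.contract, Ribbon.dual, Ribbon.delete, Ribbon.partialDual,
        flagsOf_edgeSet, flagsOf_singleton]
    · funext f
      by_cases hfF : f ∈ G.flags
      · by_cases hfe : f ∈ e
        · simp [Ribbon.contract, Ribbon.dual, Ribbon.delete, Ribbon.partialDual,
            flagsOf_edgeSet, flagsOf_singleton, hfF, hfe]
        · by_cases hfA : f ∈ Ribbon.flagsOf A <;>
            simp [Ribbon.contract, Ribbon.dual, Ribbon.delete, Ribbon.partialDual,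
              flagsOf_edgeSet, flagsOf_singleton, hfF, hfe, hfA]
      · simp [Ribbon.contract, Ribbon.dual, Ribbon.delete, Ribbon.partialDual,
          flagsOf_edgeSet, flagsOf_singleton, hfF]
    · funext f
      by_cases hfF : f ∈ G.flags
      · by_cases hfe : f ∈ e
        · simp [Ribbon.contract, Ribbon.dual, Ribbon.delete, Ribbon.partialDual,
            flagsOf_edgeSet, flagsOf_singleton, hfF, hfe]
        · simp [Ribbon.contract, Ribbon.dual, Ribbon.delete, Ribbon.partialDual,
            flagsOf_edgeSet, flagsOf_singleton, hfF, hfe]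
          refine firstIn_congr (fun x hx => ?_) _
          by_cases hxF : x ∈ G.flags
          · have hxe : x ∈ e := by
              by_contra hxe
              exact hx (Finset.mem_sdiff.2 ⟨hxF, hxe⟩)
            simp [hxF, hdisj x hxe]
          · simp [hxF]
      · simp [Ribbon.contract, Ribbon.dual, Ribbon.delete, Ribbon.partialDual,
          flagsOf_edgeSet, flagsOf_singleton, hfF]
    · funext f
      by_cases hfF : f ∈ G.flags
      · by_cases hfe : f ∈ e
        · simp [Ribbon.contract, Ribbon.dual, Ribbon.delete, Ribbon.partialDual,
            flagsOf_edgeSet, flagsOf_singleton, hfF, hfe]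
        · by_cases hfA : f ∈ Ribbon.flagsOf A <;>
            simp [Ribbon.contract, Ribbon.dual, Ribbon.delete, Ribbon.partialDual,
              flagsOf_edgeSet, flagsOf_singleton, hfF, hfe, hfA]
      · simp [Ribbon.contract, Ribbon.dual, Ribbon.delete, Ribbon.partialDual,
          flagsOf_edgeSet, flagsOf_singleton, hfF]
    · simp only [Ribbon.contract, Ribbon.dual, Ribbon.delete, Ribbon.partialDual,
        Ribbon.vertexOrbits, flagsOf_edgeSet, flagsOf_singleton]
      congr 1
      apply orbits_filter_congr
      · refine step_symm_of ?_
        intro s hs a ha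
        simp only [List.mem_cons, List.not_mem_nil, or_false, List.mem_singleton] at hs
        rcases hs with rfl | rfl
        · exact (hinv a ha).2.1
        · have h0F := (hmap a ha).1
          simp [ha, h0F, (hinv a ha).1]
      · refine step_symm_of ?_
        intro s hs a ha
        simp only [List.mem_cons, List.not_mem_nil, or_false, List.mem_singleton] at hs
        rcases hs with rfl | rfl
        · exact (hinv a ha).2.1
        · by_cases haA : a ∈ Ribbon.flagsOf A
          · have h2F := (hmap a ha).2.2
            have h2A := (hclos haA).2.2
            simp [ha, haA, h2F, h2A, (hinv a ha).2.2]
          · have h0F := (hmap a ha).1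
            have h0A : G.s0 a ∉ Ribbon.flagsOf A :=
              fun hmem => haA (((hinv a ha).1) ▸ (hclos hmem).2.1)
            simp [ha, haA, h0F, h0A, (hinv a ha).1]
      · intro a ha b
        by_cases haF : a ∈ G.flags
        · have hae : a ∈ e := by
            by_contra hae
            exact ha (Finset.mem_sdiff.2 ⟨haF, hae⟩)
          exact step_iff_of_eq (fun _ => rfl) (fun _ => by simp [haF, hdisj a hae]) b
        · constructor <;> exact fun h => absurd h.1 haF

end QTE
end
end

section
/- Let 𝔾 be a connected ribbon graph with a fixed total order ≺ on E(𝔾), let Q ∈ 𝒬_𝔾, and let Q' = 𝔾*∖E(Q) ∈ 𝒬_{𝔾*} (activity with respect to Q' computed in 𝔾* with the same order). Then D_Q^* = D_{Q'}, O_Q^* = O_{Q'} and N_Q^* = N_{Q'}. -/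
/-!
Formalization of ribbon graphs in the flag (graph-encoded-map) presentation:
a finite set of flags with three involutions `s0, s1, s2` such that `s0 ∘ s2 = s2 ∘ s0`
is fixed-point-free, together with a finite set of (labelled) isolated vertices.
Vertices are the orbits of `⟨s1,s2⟩` together with the isolated vertices, edges the
orbits of `⟨s0,s2⟩`, boundary components the orbits of `⟨s0,s1⟩` together with one per
isolated vertex, and connected components the orbits of `⟨s0,s1,s2⟩` together with the
isolated vertices.  On top of this we define partial duality, deletion, contraction,
quasi-trees and their activities, packaged ribbon graphs, the packaged surface Tutte
polynomial and the generalised Krushkal polynomial.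
-/

open scoped Classical

noncomputable section

/-!
Partial duals compose by symmetric difference, `(𝔾^A)^B = 𝔾^{A ∆ B}`, and never change the
edges. Hence `(𝔾*)^{E ∖ Q} = 𝔾^{E ∆ (E ∖ Q)} = 𝔾^Q`, and since linking and orientability with
respect to a quasi-tree are read off this partial dual, all activities agree.
-/

namespace QTE

namespace Ribbon

variable {α : Type}

lemma mem_orbitOf_self {F : Finset α} {fs : List (α → α)} {x : α} (hx : x ∈ F) :
    x ∈ orbitOf F fs x :=
  Finset.mem_filter.2 ⟨hx, Relation.EqvGen.refl _⟩

lemma orbitOf_eq_of_orb {F : Finset α} {fs : List (α → α)} {x y : α} (h : Orb F fs x y) :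
    orbitOf F fs x = orbitOf F fs y := by
  ext z
  simp only [orbitOf, Finset.mem_filter, and_congr_right_iff]
  exact fun _ => ⟨h.symm.trans _ _ _, h.trans _ _ _⟩

variable (G : Ribbon α)

lemma subset_edgeSet_of_mem_quasiTrees {Q : Finset (Finset α)} (hQ : Q ∈ G.quasiTrees) :
    Q ⊆ G.edgeSet :=
  Finset.mem_powerset.1 (Finset.mem_filter.1 hQ).1

lemma mem_flagsOf_iff {A : Finset (Finset α)} (hA : A ⊆ G.edgeSet) {f : α} (hf : f ∈ G.flags) :
    f ∈ flagsOf A ↔ orbitOf G.flags [G.s0, G.s2] f ∈ A := by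
  refine ⟨fun hfA => ?_, fun h => Finset.mem_biUnion.2 ⟨_, h, mem_orbitOf_self hf⟩⟩
  obtain ⟨e, heA, hfe⟩ := Finset.mem_biUnion.1 hfA
  obtain ⟨x, -, rfl⟩ := Finset.mem_image.1 (hA heA)
  rwa [orbitOf_eq_of_orb (Finset.mem_filter.1 hfe).2] at heA

lemma step_partialDual (A : Finset (Finset α)) :
    Step G.flags [(G.partialDual A).s0, (G.partialDual A).s2] = Step G.flags [G.s0, G.s2] := by
  funext x y
  simp only [Step, partialDual, List.mem_cons, List.not_mem_nil, or_false, exists_eq_or_imp,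
    exists_eq_left, eq_iff_iff]
  constructor <;> rintro ⟨hx, hy, h⟩ <;> refine ⟨hx, hy, ?_⟩ <;> split_ifs at h ⊢ <;> tauto

lemma flags_partialDual (A : Finset (Finset α)) : (G.partialDual A).flags = G.flags := rfl

lemma edgeSet_partialDual (A : Finset (Finset α)) : (G.partialDual A).edgeSet = G.edgeSet := by
  unfold edgeSet orbits orbitOf Orb
  rw [flags_partialDual, step_partialDual]

lemma edgeSet_dual : G.dual.edgeSet = G.edgeSet :=
  G.edgeSet_partialDual _

lemma partialDual_partialDual {A B : Finset (Finset α)} (hA : A ⊆ G.edgeSet)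
    (hB : B ⊆ G.edgeSet) : (G.partialDual A).partialDual B = G.partialDual (symmDiff A B) := by
  have hAB : symmDiff A B ⊆ G.edgeSet :=
    (symmDiff_le_sup (a := A) (b := B)).trans (Finset.union_subset hA hB)
  have key : ∀ f ∈ G.flags,
      (f ∈ flagsOf (symmDiff A B) ↔ ¬(f ∈ flagsOf A ↔ f ∈ flagsOf B)) := by
    intro f hf
    rw [G.mem_flagsOf_iff hAB hf, G.mem_flagsOf_iff hA hf, G.mem_flagsOf_iff hB hf,
      Finset.mem_symmDiff]
    tauto
  simp only [partialDual, Ribbon.mk.injEq, true_and, and_true]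
  constructor <;> funext f <;> by_cases hf : f ∈ G.flags <;> simp only [hf, ↓reduceIte]
  all_goals simp only [key f hf]; split_ifs <;> tauto

lemma dual_partialDual_sdiff {Q : Finset (Finset α)} (hQ : Q ⊆ G.edgeSet) :
    G.dual.partialDual (G.edgeSet \ Q) = G.partialDual Q := by
  rw [dual, G.partialDual_partialDual subset_rfl Finset.sdiff_subset, symmDiff_comm,
    symmDiff_of_le Finset.sdiff_subset, Finset.sdiff_sdiff_eq_self hQ]

lemma live_dual_sdiff (lt : Finset α → Finset α → Prop) {Q : Finset (Finset α)}
    (hQ : Q ⊆ G.edgeSet) : G.dual.Live lt (G.edgeSet \ Q) = G.Live lt Q := by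
  unfold Live Links
  rw [edgeSet_dual, dual_partialDual_sdiff G hQ]

lemma nonorientableWrt_dual_sdiff {Q : Finset (Finset α)} (hQ : Q ⊆ G.edgeSet) :
    G.dual.NonorientableWrt (G.edgeSet \ Q) = G.NonorientableWrt Q := by
  unfold NonorientableWrt
  rw [dual_partialDual_sdiff G hQ]

end Ribbon

theorem activity_sets_dual_general {α : Type} (G : Ribbon α) (lt : Finset α → Finset α → Prop)
    (Q : Finset (Finset α)) (hQ : Q ∈ G.quasiTrees) :
    G.DExt lt Q = G.dual.DInt lt (G.edgeSet \ Q) ∧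
    G.OExt lt Q = G.dual.OInt lt (G.edgeSet \ Q) ∧
    G.NExt lt Q = G.dual.NInt lt (G.edgeSet \ Q) := by
  have hQE := G.subset_edgeSet_of_mem_quasiTrees hQ
  simp only [Ribbon.DExt, Ribbon.DInt, Ribbon.OExt, Ribbon.OInt, Ribbon.NExt, Ribbon.NInt,
    G.live_dual_sdiff lt hQE, G.nonorientableWrt_dual_sdiff hQE, and_self]

/-- Let `𝔾` be a connected ribbon graph with a fixed total order on
`E(𝔾)`, `Q ∈ 𝒬_𝔾`, and `Q' = 𝔾*∖E(Q) ∈ 𝒬_{𝔾*}` (with edge set `E(𝔾)∖Q`,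
activities computed in `𝔾*` with the same order).  Then `D_Q^* = D_{Q'}`,
`O_Q^* = O_{Q'}` and `N_Q^* = N_{Q'}`. -/
theorem activity_sets_dual {α : Type} (G : Ribbon α) (hG : G.IsRibbon)
    (hc : G.Connected) (lt : Finset α → Finset α → Prop)
    (hlt : IsStrictTotalOrder (Finset α) lt)
    (Q : Finset (Finset α)) (hQ : Q ∈ G.quasiTrees) :
    G.DExt lt Q = G.dual.DInt lt (G.edgeSet \ Q) ∧
    G.OExt lt Q = G.dual.OInt lt (G.edgeSet \ Q) ∧
    G.NExt lt Q = G.dual.NInt lt (G.edgeSet \ Q) :=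
  activity_sets_dual_general G lt Q hQ

end QTE
end
end
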